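/- Let ℓ ≥ 1 and let (a_n, b_n) be the mex-defined sequences. Let P := {(x,y) : x+y ≤ ℓ} ∪ {(a_n,b_n) : n ≥ 0} ∪ {(b_n,a_n) : n ≥ 0}. Then P is stable for the Wythoff moves: there is no Wythoff move between two distinct elements of P with the source having coordinate sum > ℓ. -/

import Mathlib

/-- The minimum excluded value of a set of natural numbers. -/
noncomputable def mex (S : Set ℕ) : ℕ := sInf {m : ℕ | m ∉ S}

/-- `MexSeq ℓ a b` says that `a`, `b` are the sequences defined by
    `a 0 = ℓ+1`, `b 0 = 2ℓ+2`, and for `n ≥ 1`: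
    `a n = mex({a i, b i : i < n} ∪ {0,…,ℓ})`, `b n = a n + n + ℓ + 1`. -/
def MexSeq (ℓ : ℕ) (a b : ℕ → ℕ) : Prop :=
  a 0 = ℓ + 1 ∧ b 0 = 2 * ℓ + 2 ∧
  (∀ n : ℕ, 1 ≤ n →
    a n = mex ({m : ℕ | ∃ i < n, m = a i ∨ m = b i} ∪ {m : ℕ | m ≤ ℓ})) ∧
  (∀ n : ℕ, 1 ≤ n → b n = a n + n + ℓ + 1)

/-- A Wythoff move from `p` to `q` in `ℕ × ℕ`: remove a positive number of
    tokens from one pile, or the same positive number from both piles. -/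
def WythoffMove (p q : ℕ × ℕ) : Prop :=
  (q.1 = p.1 ∧ q.2 < p.2) ∨ (q.1 < p.1 ∧ q.2 = p.2) ∨
  (q.1 < p.1 ∧ q.2 < p.2 ∧ p.1 - q.1 = p.2 - q.2)

/-!
`a` is strictly increasing (a mex over growing finite sets that never returns an earlier value),
hence so are `b` and the gap `bₙ - aₙ = n + ℓ + 1`, which exceeds `ℓ`. From `(aₙ, bₙ)`, a move to
another `(aₘ, bₘ)` keeps `a`, `b` or the gap fixed, contradicting injectivity. A move to
`(bₘ, aₘ)` along one coordinate makes some `aᵢ` equal to some `bⱼ`, which the mex excludes, and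
a diagonal one would give `aₙ + aₘ = bₙ + bₘ`. A move to a low position keeps a coordinate `> ℓ`
or the gap `> ℓ`. Positions `(bₙ, aₙ)` follow by the symmetry `(x, y) ↦ (y, x)`.
-/

theorem mex_not_mem {S : Set ℕ} (hS : S.Finite) : mex S ∉ S :=
  Nat.sInf_mem hS.infinite_compl.nonempty

theorem mex_mono {S T : Set ℕ} (hST : S ⊆ T) (hT : T.Finite) : mex S ≤ mex T :=
  Nat.sInf_le fun hS => mex_not_mem hT (hST hS)

theorem WythoffMove.swap {p q : ℕ × ℕ} (h : WythoffMove p q) : WythoffMove p.swap q.swap := by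
  rcases h with ⟨h₁, h₂⟩ | ⟨h₁, h₂⟩ | ⟨h₁, h₂, h₃⟩
  · exact Or.inr (Or.inl ⟨h₂, h₁⟩)
  · exact Or.inl ⟨h₂, h₁⟩
  · exact Or.inr (Or.inr ⟨h₂, h₁, h₃.symm⟩)

def mexSeqExcluded (ℓ : ℕ) (a b : ℕ → ℕ) (n : ℕ) : Set ℕ :=
  {m : ℕ | ∃ i < n, m = a i ∨ m = b i} ∪ {m : ℕ | m ≤ ℓ}

theorem mexSeqExcluded_finite (ℓ : ℕ) (a b : ℕ → ℕ) (n : ℕ) :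
    (mexSeqExcluded ℓ a b n).Finite := by
  refine ((((Set.finite_Iio n).image a).union ((Set.finite_Iio n).image b)).union
    (Set.finite_Iic ℓ)).subset ?_
  rintro m (⟨i, hi, rfl | rfl⟩ | hm)
  · exact Or.inl (Or.inl ⟨i, hi, rfl⟩)
  · exact Or.inl (Or.inr ⟨i, hi, rfl⟩)
  · exact Or.inr hm

theorem mexSeqExcluded_mono (ℓ : ℕ) (a b : ℕ → ℕ) {m n : ℕ} (hmn : m ≤ n) :
    mexSeqExcluded ℓ a b m ⊆ mexSeqExcluded ℓ a b n := by
  rintro k (⟨i, hi, hk⟩ | hk)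
  · exact Or.inl ⟨i, hi.trans_le hmn, hk⟩
  · exact Or.inr hk

def mexSeqPositions (ℓ : ℕ) (a b : ℕ → ℕ) : Set (ℕ × ℕ) :=
  {p : ℕ × ℕ | p.1 + p.2 ≤ ℓ} ∪
    {p : ℕ × ℕ | ∃ n : ℕ, p = (a n, b n)} ∪
    {p : ℕ × ℕ | ∃ n : ℕ, p = (b n, a n)}

theorem swap_mem_mexSeqPositions {ℓ : ℕ} {a b : ℕ → ℕ} {q : ℕ × ℕ}
    (hq : q ∈ mexSeqPositions ℓ a b) : q.swap ∈ mexSeqPositions ℓ a b := by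
  rcases hq with (hq | ⟨m, rfl⟩) | ⟨m, rfl⟩
  · exact Or.inl (Or.inl (show q.2 + q.1 ≤ ℓ from (add_comm q.2 q.1).trans_le hq))
  · exact Or.inr ⟨m, rfl⟩
  · exact Or.inl (Or.inr ⟨m, rfl⟩)

namespace MexSeq

variable {ℓ : ℕ} {a b : ℕ → ℕ}

theorem b_eq (hab : MexSeq ℓ a b) (n : ℕ) : b n = a n + n + ℓ + 1 := by
  rcases Nat.eq_zero_or_pos n with rfl | hn
  · rw [hab.2.1, hab.1]; ring
  · exact hab.2.2.2 n hn

theorem a_not_mem_mexSeqExcluded (hab : MexSeq ℓ a b) {n : ℕ} (hn : 0 < n) :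
    a n ∉ mexSeqExcluded ℓ a b n := by
  rw [hab.2.2.1 n hn]
  exact mex_not_mem (mexSeqExcluded_finite ℓ a b n)

theorem lt_a (hab : MexSeq ℓ a b) (n : ℕ) : ℓ < a n := by
  rcases Nat.eq_zero_or_pos n with rfl | hn
  · rw [hab.1]; exact Nat.lt_succ_self ℓ
  · exact not_le.mp fun hle => hab.a_not_mem_mexSeqExcluded hn (Or.inr hle)

theorem strictMono_a (hab : MexSeq ℓ a b) : StrictMono a := by
  refine strictMono_nat_of_lt_succ fun n => ?_
  have hne : a n ≠ a (n + 1) := fun he =>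
    hab.a_not_mem_mexSeqExcluded n.succ_pos (he ▸ Or.inl ⟨n, n.lt_succ_self, Or.inl rfl⟩)
  have hle : a n ≤ a (n + 1) := by
    rcases Nat.eq_zero_or_pos n with rfl | hn
    · rw [hab.1]; exact hab.lt_a 1
    · rw [hab.2.2.1 n hn, hab.2.2.1 (n + 1) n.succ_pos]
      exact mex_mono (mexSeqExcluded_mono ℓ a b n.le_succ) (mexSeqExcluded_finite ℓ a b _)
  exact hle.lt_of_ne hne

theorem strictMono_b (hab : MexSeq ℓ a b) : StrictMono b := fun m n hmn => by
  have := hab.strictMono_a hmn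
  rw [hab.b_eq, hab.b_eq]
  omega

theorem b_sub_a (hab : MexSeq ℓ a b) (n : ℕ) : b n - a n = n + ℓ + 1 := by
  rw [hab.b_eq]; omega

theorem a_ne_b (hab : MexSeq ℓ a b) (m n : ℕ) : a n ≠ b m := by
  rcases lt_or_ge m n with hmn | hnm
  · exact fun he => hab.a_not_mem_mexSeqExcluded (m.zero_le.trans_lt hmn)
      (Or.inl ⟨m, hmn, Or.inr he⟩)
  · have := hab.strictMono_a.monotone hnm
    rw [hab.b_eq]; omega

theorem not_wythoffMove_of_add_le (hab : MexSeq ℓ a b) (n : ℕ) {q : ℕ × ℕ}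
    (hq : q.1 + q.2 ≤ ℓ) : ¬ WythoffMove (a n, b n) q := by
  have han := hab.lt_a n
  have hgap := hab.b_sub_a n
  rintro (⟨h₁, -⟩ | ⟨-, h₂⟩ | ⟨-, -, h₃⟩) <;> dsimp only at * <;> omega

theorem not_wythoffMove_a_b (hab : MexSeq ℓ a b) (m n : ℕ) :
    ¬ WythoffMove (a n, b n) (a m, b m) := by
  rintro (⟨h₁, h₂⟩ | ⟨h₁, h₂⟩ | ⟨-, h₂, h₃⟩) <;> dsimp only at *
  · rw [hab.strictMono_a.injective h₁] at h₂; exact h₂.false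
  · rw [hab.strictMono_b.injective h₂] at h₁; exact h₁.false
  · have : n = m := by have := hab.b_sub_a n; have := hab.b_sub_a m; omega
    subst this; exact h₂.false

theorem not_wythoffMove_b_a (hab : MexSeq ℓ a b) (m n : ℕ) :
    ¬ WythoffMove (a n, b n) (b m, a m) := by
  rintro (⟨h₁, -⟩ | ⟨-, h₂⟩ | ⟨h₁, h₂, h₃⟩) <;> dsimp only at *
  · exact hab.a_ne_b m n h₁.symm
  · exact hab.a_ne_b n m h₂
  · have := hab.b_sub_a n; have := hab.b_sub_a m; omega

theorem not_wythoffMove_of_mem (hab : MexSeq ℓ a b) (n : ℕ) {q : ℕ × ℕ}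
    (hq : q ∈ mexSeqPositions ℓ a b) : ¬ WythoffMove (a n, b n) q := by
  rcases hq with (hq | ⟨m, rfl⟩) | ⟨m, rfl⟩
  · exact hab.not_wythoffMove_of_add_le n hq
  · exact hab.not_wythoffMove_a_b m n
  · exact hab.not_wythoffMove_b_a m n

end MexSeq

theorem mexSeq_ppos_stable_general (ℓ : ℕ) (a b : ℕ → ℕ)
    (hab : MexSeq ℓ a b)
    (P : Set (ℕ × ℕ))
    (hP : P = {p : ℕ × ℕ | p.1 + p.2 ≤ ℓ} ∪
          {p : ℕ × ℕ | ∃ n : ℕ, p = (a n, b n)} ∪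
          {p : ℕ × ℕ | ∃ n : ℕ, p = (b n, a n)}) :
    ∀ p ∈ P, ℓ < p.1 + p.2 → ∀ q ∈ P, ¬ WythoffMove p q := by
  change P = mexSeqPositions ℓ a b at hP
  subst hP
  rintro p ((hp | ⟨n, rfl⟩) | ⟨n, rfl⟩) hsum q hq hmove
  · exact absurd hp (not_le.mpr hsum)
  · exact hab.not_wythoffMove_of_mem n hq hmove
  · exact hab.not_wythoffMove_of_mem n (swap_mem_mexSeqPositions hq) hmove.swap

theorem mexSeq_ppos_stable (ℓ : ℕ) (hℓ : 1 ≤ ℓ) (a b : ℕ → ℕ)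
    (hab : MexSeq ℓ a b)
    (P : Set (ℕ × ℕ))
    (hP : P = {p : ℕ × ℕ | p.1 + p.2 ≤ ℓ} ∪
          {p : ℕ × ℕ | ∃ n : ℕ, p = (a n, b n)} ∪
          {p : ℕ × ℕ | ∃ n : ℕ, p = (b n, a n)}) :
    ∀ p ∈ P, ℓ < p.1 + p.2 → ∀ q ∈ P, ¬ WythoffMove p q :=
  mexSeq_ppos_stable_general ℓ a b hab P hP
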